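/- arXiv:math/0608469 — 4 statements merged into one kernel-verified Lean document; each statement's English description precedes it below -/
import Mathlib

section
/- Let F be a finite field and γ a permutation of F fixing 0 and 1. If γ normalizes both the group of multiplications Γ(F×) = {x ↦ ax : a ∈ F×} and its conjugate s·Γ(F×)·s where s is the involution x ↦ -x+1, then γ is a field automorphism of F. -/
/-!
The conjugate `γ⁻¹ ∘ (x ↦ γ a · x) ∘ γ` is a multiplication sending `1` to `a`, so it is the
multiplication by `a`; hence `γ` is multiplicative. The same argument applies to `sγs`, and its
multiplicativity says that `γ` preserves the circle operation `u ∘ v = u + v - uv`. As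
`u ∘ u/(u-1) = 0`, this forces `γ (u - 1) = γ u - 1`, and then
`γ (x + y) = γ y * γ (x / y + 1) = γ x + γ y`.
-/

/-- The group of multiplications `Γ(F×) = {x ↦ ax : a ∈ F×}` as a set of permutations. -/
def GammaMul {F : Type*} [Field F] : Set (Equiv.Perm F) :=
  {f | ∃ a : Fˣ, ∀ x : F, f x = (a : F) * x}

section

variable {F : Type*} [Field F]

theorem mulLeft₀_mem_gammaMul {a : F} (ha : a ≠ 0) : Equiv.mulLeft₀ a ha ∈ GammaMul :=
  ⟨Units.mk0 a ha, fun _ => rfl⟩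

theorem map_mul_of_conj_mem_gammaMul {σ : Equiv.Perm F} (h0 : σ 0 = 0) (h1 : σ 1 = 1)
    (hσ : ∀ f ∈ GammaMul, σ⁻¹ * f * σ ∈ GammaMul) (a x : F) : σ (a * x) = σ a * σ x := by
  rcases eq_or_ne a 0 with rfl | ha
  · simp [h0]
  have hσa : σ a ≠ 0 := fun h => ha (σ.injective (h.trans h0.symm))
  obtain ⟨b, hb⟩ := hσ _ (mulLeft₀_mem_gammaMul hσa)
  have hconj : ∀ y, σ.symm (σ a * σ y) = b * y := by
    simpa [Equiv.Perm.mul_apply, Equiv.Perm.inv_def] using hb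
  have hba : (b : F) = a := by simpa [h1] using (hconj 1).symm
  simpa [hba] using (congrArg σ (hconj x)).symm

theorem conj_mem_of_conj_mem_conj {G : Type*} [Group G] {S : Set G} {s γ : G} (hs : s * s = 1)
    (hγ : ∀ f ∈ (fun g => s * g * s) '' S, γ⁻¹ * f * γ ∈ (fun g => s * g * s) '' S) :
    ∀ f ∈ S, (s * γ * s)⁻¹ * f * (s * γ * s) ∈ S := by
  have hs' : s⁻¹ = s := inv_eq_of_mul_eq_one_right hs
  intro f hf
  obtain ⟨g, hg, hgf⟩ := hγ _ ⟨f, hf, rfl⟩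
  have hg' : g = s * (γ⁻¹ * (s * f * s) * γ) * s := by
    rw [← hgf, ← mul_assoc, ← mul_assoc, hs, one_mul, mul_assoc, hs, mul_one]
  have : (s * γ * s)⁻¹ * f * (s * γ * s) = g := by
    rw [hg', mul_inv_rev, mul_inv_rev, hs']
    simp only [mul_assoc]
  exact this ▸ hg

section Circle

variable {γ : F →*₀ F}

theorem map_sub_one_of_map_circle
    (hcirc : ∀ u v, γ (u + v - u * v) = γ u + γ v - γ u * γ v) {u : F} (hu : u ≠ 0) :
    γ (u - 1) = γ u - 1 := by
  rcases eq_or_ne u 1 with rfl | hu1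
  · simp
  have hinv : u + u / (u - 1) - u * (u / (u - 1)) = 0 := by
    field_simp
    ring
  have h := hcirc u (u / (u - 1))
  rw [hinv, map_zero, map_div₀] at h
  have hγu : γ u ≠ 0 := (map_ne_zero γ).mpr hu
  have hγu1 : γ (u - 1) ≠ 0 := (map_ne_zero γ).mpr (sub_ne_zero.mpr hu1)
  field_simp at h
  apply mul_left_cancel₀ hγu
  linear_combination -h

theorem map_neg_one_of_map_circle
    (hcirc : ∀ u v, γ (u + v - u * v) = γ u + γ v - γ u * γ v) : γ (-1) = -1 := by
  rcases eq_or_ne (2 : F) 0 with h2 | h2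
  · have : (-1 : F) = 1 := by linear_combination -h2
    rw [this, map_one]
  have hγ2 : γ 2 = 2 := by
    have h := map_sub_one_of_map_circle hcirc h2
    rw [show (2 : F) - 1 = 1 by norm_num, map_one] at h
    linear_combination -h
  have h := map_sub_one_of_map_circle hcirc (neg_ne_zero.mpr one_ne_zero)
  rw [show (-1 - 1 : F) = -1 * 2 by ring, map_mul, hγ2] at h
  linear_combination h

theorem map_add_one_of_map_circle
    (hcirc : ∀ u v, γ (u + v - u * v) = γ u + γ v - γ u * γ v) (t : F) :
    γ (t + 1) = γ t + 1 := by
  rcases eq_or_ne t (-1) with rfl | ht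
  · simp [map_neg_one_of_map_circle hcirc]
  have h := map_sub_one_of_map_circle hcirc (u := t + 1) (by
    contrapose! ht
    linear_combination ht)
  rw [add_sub_cancel_right] at h
  linear_combination -h

theorem map_add_of_map_circle
    (hcirc : ∀ u v, γ (u + v - u * v) = γ u + γ v - γ u * γ v) (x y : F) :
    γ (x + y) = γ x + γ y := by
  rcases eq_or_ne y 0 with rfl | hy
  · simp
  calc γ (x + y) = γ (y * (x / y + 1)) := by field_simp
    _ = γ y * (γ (x / y) + 1) := by rw [map_mul, map_add_one_of_map_circle hcirc]
    _ = γ x + γ y := by rw [mul_add, ← map_mul, mul_div_cancel₀ x hy, mul_one, add_comm]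

end Circle

end

theorem stmt1_general {F : Type*} [Field F]
    (s γ : Equiv.Perm F) (hs : ∀ x : F, s x = 1 - x)
    (h0 : γ 0 = 0) (h1 : γ 1 = 1)
    (hnorm1 : ∀ f : Equiv.Perm F, f ∈ GammaMul ↔ γ⁻¹ * f * γ ∈ GammaMul)
    (hnorm2 : ∀ f : Equiv.Perm F,
      f ∈ (fun g => s * g * s) '' GammaMul ↔ γ⁻¹ * f * γ ∈ (fun g => s * g * s) '' GammaMul) :
    ∃ e : F ≃+* F, ∀ x : F, γ x = e x := by
  have hss : s * s = 1 := Equiv.ext fun x => by simp [hs]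
  have hmul := map_mul_of_conj_mem_gammaMul h0 h1 fun f hf => (hnorm1 f).mp hf
  have hmul' := map_mul_of_conj_mem_gammaMul (σ := s * γ * s) (by simp [hs, h1])
    (by simp [hs, h0]) (conj_mem_of_conj_mem_conj hss fun f hf => (hnorm2 f).mp hf)
  let γ₀ : F →*₀ F := { toFun := γ, map_zero' := h0, map_one' := h1, map_mul' := hmul }
  have hcirc : ∀ u v, γ₀ (u + v - u * v) = γ₀ u + γ₀ v - γ₀ u * γ₀ v := by
    intro u v
    have h := hmul' (1 - u) (1 - v)
    simp only [Equiv.Perm.mul_apply, hs, sub_sub_cancel] at h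
    rw [show 1 - (1 - u) * (1 - v) = u + v - u * v by ring] at h
    change γ _ = γ u + γ v - γ u * γ v
    linear_combination -h
  exact ⟨{ γ with map_mul' := hmul, map_add' := map_add_of_map_circle hcirc }, fun _ => rfl⟩

/-- a permutation of a finite field fixing `0` and `1` that normalizes
both `Γ(F×)` and `s Γ(F×) s` (with `s : x ↦ 1 - x`) is a field automorphism. -/
theorem stmt1 {F : Type*} [Field F] [Fintype F]
    (s γ : Equiv.Perm F) (hs : ∀ x : F, s x = 1 - x)
    (h0 : γ 0 = 0) (h1 : γ 1 = 1)
    (hnorm1 : ∀ f : Equiv.Perm F, f ∈ GammaMul ↔ γ⁻¹ * f * γ ∈ GammaMul)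
    (hnorm2 : ∀ f : Equiv.Perm F,
      f ∈ (fun g => s * g * s) '' GammaMul ↔ γ⁻¹ * f * γ ∈ (fun g => s * g * s) '' GammaMul) :
    ∃ e : F ≃+* F, ∀ x : F, γ x = e x :=
  stmt1_general s γ hs h0 h1 hnorm1 hnorm2
end

section
/- In a finite field F with more than 2 elements, the subgroup of Sym(F) generated by Γ(F×) and sΓ(F×)s, where s: x ↦ 1-x, equals the full affine group {x ↦ ax+b : a ∈ F×, b ∈ F}. -/
/-- for a finite field `F` with more than two elements, the subgroup of
`Sym(F)` generated by `Γ(F×)` and `s Γ(F×) s`, where `s : x ↦ 1 - x`, is the full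
one-dimensional affine group `{x ↦ ax + b : a ∈ F×, b ∈ F}`. -/
theorem stmt2 {F : Type*} [Field F] [Fintype F] (hF : 2 < Fintype.card F)
    (s : Equiv.Perm F) (hs : ∀ x : F, s x = 1 - x) :
    (Subgroup.closure (GammaMul ∪ (fun g => s * g * s) '' GammaMul) :
        Set (Equiv.Perm F)) =
      {f | ∃ a : Fˣ, ∃ b : F, ∀ x : F, f x = (a : F) * x + b} := by
  classical
  set S : Set (Equiv.Perm F) := GammaMul ∪ (fun g => s * g * s) '' GammaMul with hS
  -- the affine subgroup
  set A : Subgroup (Equiv.Perm F) :=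
    { carrier := {f | ∃ a : Fˣ, ∃ b : F, ∀ x : F, f x = (a : F) * x + b}
      one_mem' := ⟨1, 0, by simp⟩
      mul_mem' := by
        rintro f g ⟨a, b, hf⟩ ⟨c, d, hg⟩
        refine ⟨a * c, (a : F) * d + b, fun x => ?_⟩
        simp only [Equiv.Perm.mul_apply, hf, hg, Units.val_mul]
        ring
      inv_mem' := by
        rintro f ⟨a, b, hf⟩
        refine ⟨a⁻¹, -((a : F)⁻¹ * b), fun x => ?_⟩
        apply f.injective
        rw [show f (f⁻¹ x) = x from f.apply_symm_apply x, hf]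
        simp only [Units.val_inv_eq_inv_val]
        field_simp
        ring } with hA
  -- the multiplication permutations
  have hm : ∀ a : Fˣ, Equiv.mulLeft₀ (a : F) a.ne_zero ∈ GammaMul :=
    fun a => ⟨a, fun x => rfl⟩
  set m : Fˣ → Equiv.Perm F := fun a => Equiv.mulLeft₀ (a : F) a.ne_zero with hmdef
  have hmx : ∀ (a : Fˣ) (x : F), m a x = (a : F) * x := fun a x => rfl
  have hmcl : ∀ a : Fˣ, m a ∈ Subgroup.closure S :=
    fun a => Subgroup.subset_closure (Or.inl (hm a))
  have hscl : ∀ a : Fˣ, s * m a * s ∈ Subgroup.closure S :=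
    fun a => Subgroup.subset_closure (Or.inr ⟨m a, hm a, rfl⟩)
  -- find a₀ ≠ 0, 1
  obtain ⟨a₀, h0, h1⟩ : ∃ a₀ : F, a₀ ≠ 0 ∧ a₀ ≠ 1 := by
    by_contra h
    push_neg at h
    have hsub : (Finset.univ : Finset F) ⊆ {0, 1} := by
      intro x _
      simp only [Finset.mem_insert, Finset.mem_singleton]
      by_cases hx : x = 0
      · exact Or.inl hx
      · exact Or.inr (h x hx)
    have := Finset.card_le_card hsub
    have h2 : ({0, 1} : Finset F).card ≤ 2 :=
      (Finset.card_insert_le _ _).trans (by simp)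
    rw [Finset.card_univ] at this
    omega
  set A₀ : Fˣ := Units.mk0 a₀ h0 with hA₀
  have h1' : 1 - a₀ ≠ 0 := sub_ne_zero.mpr (Ne.symm h1)
  -- the basic translation
  set g : Equiv.Perm F := (s * m A₀ * s) * m A₀⁻¹ with hg
  have hgcl : g ∈ Subgroup.closure S := mul_mem (hscl A₀) (hmcl A₀⁻¹)
  have hgx : ∀ x : F, g x = x + (1 - a₀) := by
    intro x
    simp only [hg, hA₀, Equiv.Perm.mul_apply, hmx, hs, Units.val_inv_eq_inv_val,
      Units.val_mk0]
    field_simp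
    ring
  -- all translations
  have htrans : ∀ b : F, ∃ f ∈ Subgroup.closure S, ∀ x : F, f x = x + b := by
    intro b
    by_cases hb : b = 0
    · exact ⟨1, one_mem _, fun x => by simp [hb]⟩
    · set c : Fˣ := Units.mk0 (b / (1 - a₀)) (div_ne_zero hb h1') with hc
      refine ⟨m c * g * m c⁻¹, mul_mem (mul_mem (hmcl c) hgcl) (hmcl c⁻¹), fun x => ?_⟩
      simp only [hc, Equiv.Perm.mul_apply, hmx, hgx, Units.val_inv_eq_inv_val, Units.val_mk0]
      rw [mul_add]
      rw [mul_inv_cancel_left₀ (div_ne_zero hb h1')]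
      rw [div_mul_cancel₀ _ h1']
  -- conclude
  ext f
  constructor
  · intro hf
    have : Subgroup.closure S ≤ A := by
      apply Subgroup.closure_le A |>.mpr
      rintro f (⟨a, ha⟩ | ⟨p, ⟨a, ha⟩, rfl⟩)
      · exact ⟨a, 0, fun x => by rw [ha]; ring⟩
      · refine ⟨a, 1 - (a : F), fun x => ?_⟩
        simp only [Equiv.Perm.mul_apply, hs, ha]
        ring
    exact this hf
  · rintro ⟨a, b, hfx⟩
    obtain ⟨τ, hτcl, hτx⟩ := htrans b
    have : f = τ * m a := by
      ext x
      simp [Equiv.Perm.mul_apply, hmx, hτx, hfx]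
    rw [SetLike.mem_coe, this]
    exact mul_mem hτcl (hmcl a)
end

section
/- Let R = GR(p^n, r) be a Galois ring of odd characteristic with n > 1, and let U = 1 + pR be its group of principal units. A subgroup K ≤ R× is pure if and only if the rank (minimal number of generators) of K ∩ U is strictly less than r. -/
section RingLemmas

variable {R : Type*} [CommRing R] (p n : ℕ)

lemma charpow [CharP R (p ^ n)] {m : ℕ} (h : n ≤ m) : (p : R) ^ m = 0 := by
  have h0 : ((p ^ n : ℕ) : R) = 0 := CharP.cast_eq_zero R (p ^ n)
  push_cast at h0
  calc (p : R) ^ m = (p : R) ^ n * (p : R) ^ (m - n) := by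
        rw [← pow_add]; congr 1; omega
    _ = 0 := by rw [h0, zero_mul]

lemma charpow_ne (hp : p.Prime) [CharP R (p ^ n)] [Nontrivial R] {m : ℕ} (h : m < n) :
    (p : R) ^ m ≠ 0 := by
  intro h0
  have : ((p ^ m : ℕ) : R) = 0 := by push_cast; exact h0
  have := (CharP.cast_eq_zero_iff R (p ^ n) (p ^ m)).1 this
  have := (Nat.pow_dvd_pow_iff_le_right hp.one_lt).1 this
  omega

lemma val_exists [IsLocalRing R] (hp : p.Prime) [CharP R (p ^ n)]
    (hrad : IsLocalRing.maximalIdeal R = Ideal.span {(p : R)}) {y : R} (hy : y ≠ 0) :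
    ∃ i < n, ∃ w : Rˣ, y = (p : R) ^ i * w := by
  have hne : ∃ j, y ∉ Ideal.span {(p : R) ^ (j + 1)} := by
    refine ⟨n - 1, fun hmem => ?_⟩
    have : (p : R) ^ (n - 1 + 1) = 0 := charpow p n (by omega)
    rw [this, Ideal.span_singleton_eq_bot.2 rfl] at hmem
    exact hy hmem
  classical
  let i := Nat.find hne
  have hi1 : y ∉ Ideal.span {(p : R) ^ (i + 1)} := Nat.find_spec hne
  have hi0 : y ∈ Ideal.span {(p : R) ^ i} := by
    rcases Nat.eq_zero_or_pos i with h0 | h0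
    · rw [h0, pow_zero, Ideal.span_singleton_one]; trivial
    · have := Nat.find_min hne (m := i - 1) (by omega)
      simpa [Nat.sub_add_cancel h0] using not_not.1 this
  rw [Ideal.mem_span_singleton] at hi0
  obtain ⟨w, hw⟩ := hi0
  have hwu : IsUnit w := by
    by_contra hnu
    have : w ∈ IsLocalRing.maximalIdeal R := hnu
    rw [hrad, Ideal.mem_span_singleton] at this
    obtain ⟨v, hv⟩ := this
    exact hi1 (Ideal.mem_span_singleton.2 ⟨v, by rw [hw, hv, pow_succ]; ring⟩)
  obtain ⟨u, rfl⟩ := hwu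
  refine ⟨i, ?_, u, hw⟩
  by_contra hlt
  have : (p : R) ^ i = 0 := charpow p n (by omega)
  rw [this, zero_mul] at hw
  exact hy hw

lemma ann_mem [IsLocalRing R] (hp : p.Prime) [CharP R (p ^ n)] [Nontrivial R]
    (hrad : IsLocalRing.maximalIdeal R = Ideal.span {(p : R)}) {k : ℕ} (hk : k ≤ n) {y : R}
    (hy : (p : R) ^ k * y = 0) : y ∈ Ideal.span {(p : R) ^ (n - k)} := by
  rcases eq_or_ne y 0 with rfl | hy0
  · exact zero_mem _
  obtain ⟨i, hi, w, rfl⟩ := val_exists p n hp hrad hy0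
  have hki : (p : R) ^ (k + i) * (w : R) = 0 := by rw [pow_add, mul_assoc]; exact hy
  have hpk : (p : R) ^ (k + i) = 0 := by
    have h2 := congrArg (fun z => z * ((w⁻¹ : Rˣ) : R)) hki
    simpa [mul_assoc] using h2
  have hge : n ≤ k + i := by
    by_contra hlt
    exact charpow_ne p n hp (by omega) hpk
  exact Ideal.mem_span_singleton.2 ⟨(p : R) ^ (i - (n - k)) * w, by
    rw [← mul_assoc, ← pow_add]; congr 2; omega⟩

lemma minimal_ideal [IsLocalRing R] (hp : p.Prime) [CharP R (p ^ n)] [Nontrivial R]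
    (hrad : IsLocalRing.maximalIdeal R = Ideal.span {(p : R)}) {I : Ideal R} (hI : I ≠ ⊥) :
    (p : R) ^ (n - 1) ∈ I := by
  obtain ⟨x, hxI, hx0⟩ := Submodule.exists_mem_ne_zero_of_ne_bot hI
  obtain ⟨i, hi, w, rfl⟩ := val_exists p n hp hrad hx0
  have : (p : R) ^ (n - 1) = (p : R) ^ i * w * ((p : R) ^ (n - 1 - i) * (w⁻¹ : Rˣ)) := by
    rw [show ((p:R)^i * w * ((p:R)^(n-1-i) * (w⁻¹:Rˣ))) = (p:R)^i * (p:R)^(n-1-i) * (w * (w⁻¹:Rˣ)) by ring, ← pow_add]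
    simp [show i + (n - 1 - i) = n - 1 by omega]
  rw [this]
  exact Ideal.mul_mem_right _ _ hxI

end RingLemmas

section Binom

variable {R : Type*} [CommRing R] (p n : ℕ)

lemma binom_lemma (hp : p.Prime) (hodd : Odd p) {k : ℕ} (hk : 1 ≤ k) (x : R) :
    ∃ c : R, (1 + (p : R) ^ k * x) ^ p = 1 + (p : R) ^ (k + 1) * x + (p : R) ^ (k + 2) * c := by
  have hp3 : 3 ≤ p := by
    obtain ⟨j, hj⟩ := hodd
    have := hp.two_le
    omega
  set t : R := (p : R) ^ k * x with ht
  have hrest : (∑ m ∈ Finset.Ico 2 (p + 1), t ^ m * (p.choose m : R))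
      ∈ Ideal.span {(p : R) ^ (k + 2)} := by
    refine Ideal.sum_mem _ fun m hm => ?_
    rw [Finset.mem_Ico] at hm
    rw [Ideal.mem_span_singleton]
    rcases eq_or_lt_of_le (show m ≤ p by omega) with hmp | hmp
    · rw [hmp, Nat.choose_self]
      push_cast
      have hd : (p : R) ^ (k + 2) ∣ t ^ p := by
        rw [ht, mul_pow, ← pow_mul]
        exact (pow_dvd_pow (p : R) (by nlinarith)).mul_right _
      simpa using hd
    · obtain ⟨c, hc⟩ := hp.dvd_choose_self (by omega) hmp
      rw [hc]
      push_cast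
      have heq : t ^ m * ((p : R) * (c : R))
          = (p : R) ^ (k * m + 1) * (x ^ m * c) := by
        rw [ht, mul_pow, ← pow_mul, pow_succ]
        ring
      rw [heq]
      exact (pow_dvd_pow (p : R) (by nlinarith)).mul_right _
  have hsum : (t + 1) ^ p = ∑ m ∈ Finset.range (p + 1), t ^ m * (1 : R) ^ (p - m) * (p.choose m : R) :=
    add_pow t 1 p
  rw [Finset.range_eq_Ico, Finset.sum_eq_sum_Ico_succ_bot (by omega),
    Finset.sum_eq_sum_Ico_succ_bot (by omega)] at hsum
  simp only [pow_zero, one_pow, Nat.choose_zero_right, Nat.choose_one_right, one_mul, mul_one,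
    pow_one, Nat.cast_one] at hsum
  norm_num at hsum
  obtain ⟨c, hc⟩ := Ideal.mem_span_singleton.1 hrest
  refine ⟨c, ?_⟩
  rw [show (1 : R) + (p:R)^k * x = t + 1 by rw [ht]; ring, hsum, hc, ht]
  ring

lemma pow_p_sub_one_mem (hp : p.Prime) (hodd : Odd p) {k : ℕ} (hk : 1 ≤ k) {u : R}
    (hu : u - 1 ∈ Ideal.span {(p : R) ^ k}) : u ^ p - 1 ∈ Ideal.span {(p : R) ^ (k + 1)} := by
  obtain ⟨x, hx⟩ := Ideal.mem_span_singleton.1 hu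
  have hu' : u = 1 + (p : R) ^ k * x := by linear_combination hx
  obtain ⟨c, hc⟩ := binom_lemma p hp hodd hk (R := R) x
  rw [hu', hc]
  exact Ideal.mem_span_singleton.2 ⟨x + (p : R) * c, by ring⟩

end Binom

section Cor
variable {R : Type*} [CommRing R] (p n : ℕ)

lemma unit_exponent [CharP R (p ^ n)] (hp : p.Prime) (hodd : Odd p) (hn : 1 ≤ n)
    {u : Rˣ} (hu : (u : R) - 1 ∈ Ideal.span {(p : R)}) : u ^ (p ^ (n - 1)) = 1 := by
  have key : ∀ j : ℕ, ((u ^ (p ^ j) : Rˣ) : R) - 1 ∈ Ideal.span {(p : R) ^ (1 + j)} := by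
    intro j
    induction j with
    | zero => simpa using hu
    | succ j ih =>
      have : ((u ^ (p ^ (j + 1)) : Rˣ) : R) = (((u ^ (p ^ j) : Rˣ) : R)) ^ p := by
        rw [← Units.val_pow_eq_pow_val, ← pow_mul, pow_succ]
      rw [this, show 1 + (j + 1) = (1 + j) + 1 by omega]
      exact pow_p_sub_one_mem p hp hodd (by omega) ih
  have h := key (n - 1)
  rw [show 1 + (n - 1) = n by omega, charpow p n le_rfl,
    Ideal.span_singleton_eq_bot.2 rfl, Ideal.mem_bot, sub_eq_zero] at h
  exact Units.ext h

lemma socle_mem [IsLocalRing R] [CharP R (p ^ n)] [Nontrivial R] (hp : p.Prime) (hodd : Odd p)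
    (hn : 2 ≤ n) (hrad : IsLocalRing.maximalIdeal R = Ideal.span {(p : R)}) {u : Rˣ}
    (hu1 : (u : R) - 1 ∈ Ideal.span {(p : R)}) (hup : u ^ p = 1) :
    (u : R) - 1 ∈ Ideal.span {(p : R) ^ (n - 1)} := by
  have hupR : ((u : R)) ^ p = 1 := by
    have := congrArg (Units.val) hup
    simpa using this
  suffices aux : ∀ m : ℕ, ∀ k : ℕ, 1 ≤ k → k + m = n - 1 →
      (u : R) - 1 ∈ Ideal.span {(p : R) ^ k} → (u : R) - 1 ∈ Ideal.span {(p : R) ^ (n - 1)} by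
    exact aux (n - 1 - 1) 1 le_rfl (by omega) (by simpa using hu1)
  intro m
  induction m with
  | zero =>
    intro k hk hkm hmem
    rw [show n - 1 = k by omega]
    exact hmem
  | succ m ih =>
    intro k hk hkm hmem
    obtain ⟨x, hx⟩ := Ideal.mem_span_singleton.1 hmem
    have hu' : (u : R) = 1 + (p : R) ^ k * x := by linear_combination hx
    obtain ⟨c, hc⟩ := binom_lemma p hp hodd hk (R := R) x
    have h0 : (p : R) ^ (k + 1) * (x + (p : R) * c) = 0 := by
      have : ((u : R)) ^ p - 1 = 0 := by rw [hupR]; ring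
      rw [hu', hc] at this
      linear_combination this
    have hxm : x + (p : R) * c ∈ Ideal.span {(p : R) ^ (n - (k + 1))} :=
      ann_mem p n hp hrad (by omega) h0
    have hx_p : x ∈ Ideal.span {(p : R)} := by
      have h1 : x + (p : R) * c ∈ Ideal.span {(p : R)} := by
        obtain ⟨w, hw⟩ := Ideal.mem_span_singleton.1 hxm
        refine Ideal.mem_span_singleton.2 ⟨(p : R) ^ (n - (k + 1) - 1) * w, ?_⟩
        rw [hw, ← mul_assoc, ← pow_succ']
        congr 2
        omega
      have h2 : (p : R) * c ∈ Ideal.span {(p : R)} :=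
        Ideal.mem_span_singleton.2 ⟨c, rfl⟩
      simpa using Ideal.sub_mem _ h1 h2
    obtain ⟨b, hb⟩ := Ideal.mem_span_singleton.1 hx_p
    refine ih (k + 1) (by omega) (by omega) ?_
    refine Ideal.mem_span_singleton.2 ⟨b, ?_⟩
    rw [hx, hb, pow_succ]
    ring

lemma socle_pow_eq_one [CharP R (p ^ n)] (hp : p.Prime) (hodd : Odd p) (hn : 2 ≤ n) {u : Rˣ}
    (hu : (u : R) - 1 ∈ Ideal.span {(p : R) ^ (n - 1)}) : u ^ p = 1 := by
  obtain ⟨x, hx⟩ := Ideal.mem_span_singleton.1 hu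
  have hu' : (u : R) = 1 + (p : R) ^ (n - 1) * x := by linear_combination hx
  obtain ⟨c, hc⟩ := binom_lemma p hp hodd (k := n - 1) (by omega) (R := R) x
  refine Units.ext ?_
  rw [Units.val_pow_eq_pow_val, hu', hc, show n - 1 + 1 = n by omega,
    charpow p n le_rfl, charpow p n (by omega)]
  simp

lemma sq_zero [CharP R (p ^ n)] (hn : 2 ≤ n) {x y : R}
    (hx : x ∈ Ideal.span {(p : R) ^ (n - 1)}) (hy : y ∈ Ideal.span {(p : R) ^ (n - 1)}) :
    x * y = 0 := by
  obtain ⟨a, rfl⟩ := Ideal.mem_span_singleton.1 hx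
  obtain ⟨b, rfl⟩ := Ideal.mem_span_singleton.1 hy
  have : (p : R) ^ (n - 1) * ((p : R) ^ (n - 1)) = 0 := by
    rw [← pow_add]
    exact charpow p n (by omega)
  calc (p:R)^(n-1) * a * ((p:R)^(n-1) * b) = ((p:R)^(n-1) * (p:R)^(n-1)) * (a * b) := by ring
    _ = 0 := by rw [this, zero_mul]

lemma mk_unit [CharP R (p ^ n)] (hn : 2 ≤ n) {x : R}
    (hx : x ∈ Ideal.span {(p : R) ^ (n - 1)}) : ∃ u : Rˣ, (u : R) = 1 + x := by
  refine ⟨Units.mkOfMulEqOne (1 + x) (1 - x) ?_, rfl⟩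
  have : x * x = 0 := sq_zero p n hn hx hx
  linear_combination -this

end Cor

section Card
variable {R : Type*} [CommRing R] [IsLocalRing R] (p n r : ℕ)

lemma card_I0 [CharP R (p ^ n)] [Nontrivial R] (hp : p.Prime) (hn : 2 ≤ n)
    (hrad : IsLocalRing.maximalIdeal R = Ideal.span {(p : R)})
    (hres : Nat.card (IsLocalRing.ResidueField R) = p ^ r) :
    Nat.card (Ideal.span {(p : R) ^ (n - 1)}) = p ^ r := by
  set f : R →+ R := AddMonoidHom.mulLeft ((p : R) ^ (n - 1)) with hf
  have hker : f.ker = (Ideal.span {(p : R)}).toAddSubgroup := by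
    ext z
    simp only [AddMonoidHom.mem_ker, hf, AddMonoidHom.coe_mulLeft, Submodule.mem_toAddSubgroup]
    constructor
    · intro h
      have := ann_mem p n hp hrad (show n - 1 ≤ n by omega) h
      rwa [show n - (n - 1) = 1 by omega, pow_one] at this
    · rintro hz
      obtain ⟨w, rfl⟩ := Ideal.mem_span_singleton.1 hz
      rw [← mul_assoc, ← pow_succ, show n - 1 + 1 = n by omega, charpow p n le_rfl, zero_mul]
  have hrange : (f.range : Set R) = (Ideal.span {(p : R) ^ (n - 1)} : Ideal R) := by
    ext x
    simp only [AddMonoidHom.coe_range, Set.mem_range, hf, AddMonoidHom.coe_mulLeft, SetLike.mem_coe,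
      Ideal.mem_span_singleton]
    exact ⟨fun ⟨y, hy⟩ => ⟨y, hy.symm⟩, fun ⟨y, hy⟩ => ⟨y, hy.symm⟩⟩
  have e1 : (Ideal.span {(p : R) ^ (n - 1)} : Ideal R) ≃ f.range := Equiv.setCongr hrange.symm
  have e2 : f.range ≃+ (R ⧸ f.ker) := (QuotientAddGroup.quotientKerEquivRange f).symm
  set g : R →+ IsLocalRing.ResidueField R := (IsLocalRing.residue R).toAddMonoidHom with hg
  have hgker : g.ker = f.ker := by
    rw [hker]
    ext z
    simp only [AddMonoidHom.mem_ker, hg, RingHom.toAddMonoidHom_eq_coe,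
      Submodule.mem_toAddSubgroup]
    rw [show ((IsLocalRing.residue R : R →+ IsLocalRing.ResidueField R)) z
        = IsLocalRing.residue R z from rfl]
    rw [show IsLocalRing.residue R z = 0 ↔ z ∈ IsLocalRing.maximalIdeal R from
      Ideal.Quotient.eq_zero_iff_mem, hrad]
  have hgsurj : Function.Surjective g := Ideal.Quotient.mk_surjective
  have e3 : (R ⧸ f.ker) ≃+ IsLocalRing.ResidueField R := by
    rw [← hgker]
    exact QuotientAddGroup.quotientKerEquivOfSurjective g hgsurj
  calc Nat.card (Ideal.span {(p : R) ^ (n - 1)})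
      = Nat.card f.range := Nat.card_congr e1
    _ = Nat.card (R ⧸ f.ker) := Nat.card_congr e2.toEquiv
    _ = Nat.card (IsLocalRing.ResidueField R) := Nat.card_congr e3.toEquiv
    _ = p ^ r := hres

lemma card_U0 [CharP R (p ^ n)] [Nontrivial R] (hp : p.Prime) (hn : 2 ≤ n)
    (hrad : IsLocalRing.maximalIdeal R = Ideal.span {(p : R)})
    (hres : Nat.card (IsLocalRing.ResidueField R) = p ^ r) :
    Nat.card {u : Rˣ | (u : R) - 1 ∈ Ideal.span {(p : R) ^ (n - 1)}} = p ^ r := by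
  rw [← card_I0 p n r hp hn hrad hres]
  refine Nat.card_congr ?_
  refine Equiv.ofBijective (fun u => ⟨(u : Rˣ) - 1, u.2⟩) ⟨?_, ?_⟩
  · rintro ⟨u, hu⟩ ⟨v, hv⟩ h
    simp only [Subtype.mk.injEq, sub_left_inj] at h
    exact Subtype.ext (Units.ext h)
  · rintro ⟨x, hx⟩
    obtain ⟨u, hu⟩ := mk_unit p n hn hx
    refine ⟨⟨u, ?_⟩, ?_⟩
    · show (u : R) - 1 ∈ Ideal.span {(p : R) ^ (n - 1)}
      rw [hu]
      simpa using hx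
    · simp only [Subtype.mk.injEq]
      rw [hu]; ring

end Card

section GroupPart

variable {G : Type*} [CommGroup G] [Finite G] {p : ℕ}

lemma card_quot_pow_eq (hp : p.Prime) :
    Nat.card (G ⧸ (powMonoidHom p : G →* G).range) =
      Nat.card ((powMonoidHom p : G →* G).ker) := by
  set f : G →* G := powMonoidHom p with hf
  have h1 : Nat.card G = Nat.card (G ⧸ f.range) * Nat.card f.range :=
    Subgroup.card_eq_card_quotient_mul_card_subgroup f.range
  have h2 : Nat.card G = Nat.card (G ⧸ f.ker) * Nat.card f.ker :=
    Subgroup.card_eq_card_quotient_mul_card_subgroup f.ker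
  have h3 : Nat.card (G ⧸ f.ker) = Nat.card f.range :=
    Nat.card_congr (QuotientGroup.quotientKerEquivRange f).toEquiv
  have hpos : 0 < Nat.card f.range := Nat.card_pos
  rw [h3] at h2
  rw [h2, mul_comm (Nat.card f.range) _] at h1
  exact Nat.eq_of_mul_eq_mul_left hpos (by linarith)

lemma quot_pow_one (hp : p.Prime) (x : G ⧸ (powMonoidHom p : G →* G).range) : x ^ p = 1 := by
  induction x using QuotientGroup.induction_on with
  | H g =>
    rw [← QuotientGroup.mk_pow]
    exact (QuotientGroup.eq_one_iff _).2 ⟨g, rfl⟩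

lemma card_ker_le_of_gen (hp : p.Prime) (S : Finset G)
    (hS : Subgroup.closure (S : Set G) = ⊤) :
    Nat.card ((powMonoidHom p : G →* G).ker) ≤ p ^ S.card := by
  haveI : Fact p.Prime := ⟨hp⟩
  haveI : NeZero p := ⟨hp.ne_zero⟩
  haveI : Module (ZMod p) (Additive (G ⧸ (powMonoidHom p : G →* G).range)) := AddCommGroup.zmodModule (by
    intro x
    have h1 : Additive.toMul (p • x) = 1 := by
      rw [toMul_nsmul]
      exact quot_pow_one hp _
    exact Additive.toMul.injective (by simpa using h1))
  classical
  set T : Finset (Additive (G ⧸ (powMonoidHom p : G →* G).range)) := S.image (fun g => Additive.ofMul ((QuotientGroup.mk' (powMonoidHom p : G →* G).range) g)) with hT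
  have hspan : Submodule.span (ZMod p) (T : Set (Additive (G ⧸ (powMonoidHom p : G →* G).range))) = ⊤ := by
    set W := Submodule.span (ZMod p) (T : Set (Additive (G ⧸ (powMonoidHom p : G →* G).range))) with hW
    let Z : Subgroup (G ⧸ (powMonoidHom p : G →* G).range) :=
      { carrier := {q | Additive.ofMul q ∈ W}
        one_mem' := by
          show Additive.ofMul (1 : G ⧸ (powMonoidHom p : G →* G).range) ∈ W
          rw [ofMul_one]; exact W.zero_mem
        mul_mem' := fun ha hb => W.add_mem ha hb
        inv_mem' := fun ha => W.neg_mem ha }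
    have hclos : Subgroup.closure ((QuotientGroup.mk' (powMonoidHom p : G →* G).range) '' (S : Set G)) = ⊤ := by
      rw [← MonoidHom.map_closure, hS]
      exact Subgroup.map_top_of_surjective _ (QuotientGroup.mk'_surjective (powMonoidHom p : G →* G).range)
    have hZtop : (⊤ : Subgroup (G ⧸ (powMonoidHom p : G →* G).range)) ≤ Z := by
      rw [← hclos]
      refine (Subgroup.closure_le Z).2 ?_
      rintro q ⟨g, hg, rfl⟩
      show Additive.ofMul ((QuotientGroup.mk' (powMonoidHom p : G →* G).range) g) ∈ W
      exact Submodule.subset_span (by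
        rw [hT]
        exact Finset.mem_coe.2 (Finset.mem_image.2 ⟨g, hg, rfl⟩))
    refine Submodule.eq_top_iff'.2 fun v => ?_
    have : Additive.toMul v ∈ Z := hZtop trivial
    exact this
  have hrank : Module.finrank (ZMod p) (Additive (G ⧸ (powMonoidHom p : G →* G).range)) ≤ S.card := by
    have h1 : Module.finrank (ZMod p) (Additive (G ⧸ (powMonoidHom p : G →* G).range)) = Set.finrank (ZMod p) (T : Set (Additive (G ⧸ (powMonoidHom p : G →* G).range))) := by
      rw [Set.finrank, hspan, finrank_top]
    have h2 : T.card ≤ S.card := by rw [hT]; exact Finset.card_image_le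
    rw [h1]
    exact le_trans (finrank_span_finset_le_card T) h2
  letI : Fintype (Additive (G ⧸ (powMonoidHom p : G →* G).range)) := Fintype.ofFinite (Additive (G ⧸ (powMonoidHom p : G →* G).range))
  have hcardV : Nat.card (Additive (G ⧸ (powMonoidHom p : G →* G).range)) = p ^ Module.finrank (ZMod p) (Additive (G ⧸ (powMonoidHom p : G →* G).range)) := by
    rw [Nat.card_eq_fintype_card, Module.card_eq_pow_finrank (K := ZMod p) (V := Additive (G ⧸ (powMonoidHom p : G →* G).range)), ZMod.card]
  calc Nat.card ((powMonoidHom p : G →* G).ker)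
      = Nat.card (G ⧸ (powMonoidHom p : G →* G).range) := (card_quot_pow_eq hp).symm
    _ = Nat.card (Additive (G ⧸ (powMonoidHom p : G →* G).range)) := (Nat.card_congr Additive.toMul).symm
    _ = p ^ Module.finrank (ZMod p) (Additive (G ⧸ (powMonoidHom p : G →* G).range)) := hcardV
    _ ≤ p ^ S.card := Nat.pow_le_pow_right hp.pos hrank

lemma exists_small_gen (hp : p.Prime) (e : ℕ) (hG : ∀ g : G, g ^ (p ^ e) = 1) :
    ∃ S : Finset G, Subgroup.closure (S : Set G) = ⊤ ∧
      p ^ S.card ≤ Nat.card ((powMonoidHom p : G →* G).ker) := by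
  haveI : Fact p.Prime := ⟨hp⟩
  haveI : NeZero p := ⟨hp.ne_zero⟩
  haveI : Module (ZMod p) (Additive (G ⧸ (powMonoidHom p : G →* G).range)) := AddCommGroup.zmodModule (by
    intro x
    have h1 : Additive.toMul (p • x) = 1 := by
      rw [toMul_nsmul]
      exact quot_pow_one hp _
    exact Additive.toMul.injective (by simpa using h1))
  haveI : Module.Finite (ZMod p) (Additive (G ⧸ (powMonoidHom p : G →* G).range)) := Module.Finite.of_finite
  set d := Module.finrank (ZMod p) (Additive (G ⧸ (powMonoidHom p : G →* G).range)) with hd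
  let b : Module.Basis (Fin d) (ZMod p) (Additive (G ⧸ (powMonoidHom p : G →* G).range)) := Module.finBasis (ZMod p) (Additive (G ⧸ (powMonoidHom p : G →* G).range))
  have hg : ∀ i : Fin d, ∃ g : G, (QuotientGroup.mk' (powMonoidHom p : G →* G).range) g = Additive.toMul (b i) :=
    fun i => QuotientGroup.mk'_surjective (powMonoidHom p : G →* G).range _
  choose g hgspec using hg
  classical
  set S : Finset G := Finset.image g Finset.univ with hSdef
  have hcard : S.card ≤ d := le_trans Finset.card_image_le (by simp)
  set H : Subgroup G := Subgroup.closure (S : Set G) with hH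
  have step1 : ∀ x : G, ∃ h ∈ H, ∃ z : G, x = h * z ^ p := by
    set Hq : Subgroup (G ⧸ (powMonoidHom p : G →* G).range) := Subgroup.map (QuotientGroup.mk' (powMonoidHom p : G →* G).range) H with hHq
    set W : Submodule (ZMod p) (Additive (G ⧸ (powMonoidHom p : G →* G).range)) :=
      (AddSubgroup.toZModSubmodule p) (Subgroup.toAddSubgroup Hq) with hW
    have hbW : ∀ i : Fin d, b i ∈ W := by
      intro i
      have : Additive.toMul (b i) ∈ Hq :=
        ⟨g i, Subgroup.subset_closure (by simp [hSdef]), hgspec i⟩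
      exact this
    have hWtop : ∀ q : G ⧸ (powMonoidHom p : G →* G).range, q ∈ Hq := by
      have hsp : Submodule.span (ZMod p) (Set.range b) = ⊤ := b.span_eq
      have hle : Submodule.span (ZMod p) (Set.range b) ≤ W :=
        Submodule.span_le.2 (by rintro v ⟨i, rfl⟩; exact hbW i)
      intro q
      have : Additive.ofMul q ∈ W := hle (hsp ▸ Submodule.mem_top)
      exact this
    intro x
    obtain ⟨h, hh, hhx⟩ := hWtop ((QuotientGroup.mk' (powMonoidHom p : G →* G).range) x)
    have : (QuotientGroup.mk' (powMonoidHom p : G →* G).range) (h⁻¹ * x) = 1 := by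
      rw [map_mul, map_inv, hhx, inv_mul_cancel]
    have hmem : h⁻¹ * x ∈ (powMonoidHom p : G →* G).range := by
      rw [← QuotientGroup.ker_mk' (powMonoidHom p : G →* G).range]
      exact this
    obtain ⟨z, hz⟩ := hmem
    exact ⟨h, hh, z, by rw [show (powMonoidHom p) z = z ^ p from rfl] at hz; rw [hz]; group⟩
  have key : ∀ m : ℕ, ∀ x : G, ∃ h ∈ H, ∃ z : G, x = h * z ^ (p ^ m) := by
    intro m
    induction m with
    | zero => exact fun x => ⟨1, one_mem H, x, by simp⟩
    | succ m ih =>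
      intro x
      obtain ⟨h, hh, z, rfl⟩ := ih x
      obtain ⟨h', hh', w, rfl⟩ := step1 z
      refine ⟨h * h' ^ (p ^ m), mul_mem hh (pow_mem hh' _), w, ?_⟩
      rw [mul_pow, ← pow_mul, mul_assoc]
      congr 1
      rw [pow_succ]
      ring_nf
  have htop : H = ⊤ := by
    rw [eq_top_iff]
    intro x _
    obtain ⟨h, hh, z, rfl⟩ := key e x
    rw [hG z, mul_one]
    exact hh
  refine ⟨S, htop, ?_⟩
  calc p ^ S.card ≤ p ^ d := Nat.pow_le_pow_right hp.pos hcard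
    _ = Nat.card (Additive (G ⧸ (powMonoidHom p : G →* G).range)) := by
        letI : Fintype (Additive (G ⧸ (powMonoidHom p : G →* G).range)) := Fintype.ofFinite (Additive (G ⧸ (powMonoidHom p : G →* G).range))
        rw [Nat.card_eq_fintype_card, Module.card_eq_pow_finrank (K := ZMod p) (V := Additive (G ⧸ (powMonoidHom p : G →* G).range)), ZMod.card]
    _ = Nat.card (G ⧸ (powMonoidHom p : G →* G).range) := Nat.card_congr Additive.toMul
    _ = Nat.card ((powMonoidHom p : G →* G).ker) := card_quot_pow_eq hp

end GroupPart
/-- let `R = GR(p^n, r)` be a Galois ring of odd characteristic with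
`n > 1` and residue field of order `p^r`, and let `U = 1 + pR` be the group of
principal units. A subgroup `K ≤ Rˣ` is pure iff the minimal number of generators of
`K ∩ U` is strictly less than `r`. -/
theorem stmt10 {R : Type*} [CommRing R] [Fintype R] [IsLocalRing R]
    (p n r : ℕ) (hp : p.Prime) (hodd : Odd p) (hn : 1 < n)
    [CharP R (p ^ n)]
    (hrad : IsLocalRing.maximalIdeal R = Ideal.span {(p : R)})
    (hres : Nat.card (IsLocalRing.ResidueField R) = p ^ r)
    (K U : Subgroup Rˣ)
    (hU : ∀ u : Rˣ, u ∈ U ↔ (u : R) - 1 ∈ Ideal.span {(p : R)}) :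
    (∀ I : Ideal R, (∀ x ∈ I, ∃ u ∈ K, (u : R) = 1 + x) → I = ⊥) ↔
      sInf {m : ℕ | ∃ S : Finset ↥(K ⊓ U),
        S.card = m ∧ Subgroup.closure (S : Set ↥(K ⊓ U)) = ⊤} < r := by
  haveI : Finite Rˣ := Finite.of_injective (Units.val) (fun _ _ h => Units.ext h)
  haveI : Finite ↥(K ⊓ U) := inferInstance
  have hn2 : 2 ≤ n := hn
  have hr1 : 1 ≤ r := by
    by_contra hr
    have hr0 : r = 0 := by omega
    haveI : Finite (IsLocalRing.ResidueField R) := Quotient.finite _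
    have h2 : 1 < Nat.card (IsLocalRing.ResidueField R) := Finite.one_lt_card
    rw [hres, hr0, pow_zero] at h2
    exact lt_irrefl 1 h2
  -- the minimal nonzero ideal
  have hpn1_ne : (p : R) ^ (n - 1) ≠ 0 := charpow_ne p n hp (by omega)
  have hI0_le_p : Ideal.span {(p : R) ^ (n - 1)} ≤ Ideal.span {(p : R)} := by
    rw [Ideal.span_le, Set.singleton_subset_iff]
    exact Ideal.mem_span_singleton.2 (dvd_pow_self (p : R) (by omega))
  -- the socle subgroup as a set
  have hcardU0 : Nat.card {u : Rˣ | (u : R) - 1 ∈ Ideal.span {(p : R) ^ (n - 1)}} = p ^ r :=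
    card_U0 p n r hp hn2 hrad hres
  -- exponent fact for elements of K ⊓ U
  have hexp : ∀ g : ↥(K ⊓ U), g ^ (p ^ (n - 1)) = 1 := by
    intro g
    have hgU : ((g : Rˣ) : R) - 1 ∈ Ideal.span {(p : R)} := (hU _).1 g.2.2
    have h1 := unit_exponent p n hp hodd (by omega) hgU
    refine Subtype.ext ?_
    show (g : Rˣ) ^ (p ^ (n - 1)) = 1
    exact h1
  -- transfer of ker-pow elements into the socle set
  have hker_socle : ∀ k : ((powMonoidHom p : ↥(K ⊓ U) →* ↥(K ⊓ U)).ker),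
      ((k : ↥(K ⊓ U)) : Rˣ) ∈ {u : Rˣ | (u : R) - 1 ∈ Ideal.span {(p : R) ^ (n - 1)}} := by
    intro k
    have hk1 : ((k : ↥(K ⊓ U)) : Rˣ) ^ p = 1 := by
      have h0 : ((k : ↥(K ⊓ U)) ^ p : ↥(K ⊓ U)) = 1 := k.2
      exact congrArg Subtype.val h0
    have hkU : (((k : ↥(K ⊓ U)) : Rˣ) : R) - 1 ∈ Ideal.span {(p : R)} :=
      (hU _).1 (k : ↥(K ⊓ U)).2.2
    exact socle_mem p n hp hodd hn2 hrad hkU hk1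
  constructor
  · -- pure → rank < r
    intro hpure
    have hnotall : ¬ (∀ x ∈ Ideal.span {(p : R) ^ (n - 1)}, ∃ u ∈ K, (u : R) = 1 + x) := by
      intro hall
      have := hpure _ hall
      rw [Ideal.span_singleton_eq_bot] at this
      exact hpn1_ne this
    push_neg at hnotall
    obtain ⟨x, hxI, hxK⟩ := hnotall
    obtain ⟨u₀, hu₀⟩ := mk_unit p n hn2 hxI
    have hu₀mem : u₀ ∈ {u : Rˣ | (u : R) - 1 ∈ Ideal.span {(p : R) ^ (n - 1)}} := by
      show (u₀ : R) - 1 ∈ Ideal.span {(p : R) ^ (n - 1)}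
      rw [hu₀]
      simpa using hxI
    have hu₀K : u₀ ∉ K := fun h => hxK u₀ h hu₀
    -- injective, non-surjective map from ker into socle set
    set ι : ((powMonoidHom p : ↥(K ⊓ U) →* ↥(K ⊓ U)).ker) →
        ↥{u : Rˣ | (u : R) - 1 ∈ Ideal.span {(p : R) ^ (n - 1)}} :=
      fun k => ⟨((k : ↥(K ⊓ U)) : Rˣ), hker_socle k⟩ with hι
    have hιinj : Function.Injective ι := by
      rintro a b hab
      simp only [hι, Subtype.mk.injEq] at hab
      exact Subtype.ext (Subtype.ext hab)
    have hcardlt : Nat.card ((powMonoidHom p : ↥(K ⊓ U) →* ↥(K ⊓ U)).ker) < p ^ r := by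
      rw [← hcardU0]
      have h1 : Nat.card ((powMonoidHom p : ↥(K ⊓ U) →* ↥(K ⊓ U)).ker)
          = (Set.range ι).ncard := by
        rw [← Nat.card_coe_set_eq]
        exact (Nat.card_range_of_injective hιinj).symm
      have h2 : (Set.range ι) ⊂ Set.univ := by
        rw [Set.ssubset_univ_iff]
        intro heq
        have : (⟨u₀, hu₀mem⟩ : ↥{u : Rˣ | (u : R) - 1 ∈ Ideal.span {(p : R) ^ (n - 1)}})
            ∈ Set.range ι := by rw [heq]; trivial
        obtain ⟨k, hk⟩ := this
        have : ((k : ↥(K ⊓ U)) : Rˣ) = u₀ := congrArg Subtype.val hk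
        exact hu₀K (this ▸ (k : ↥(K ⊓ U)).2.1)
      calc Nat.card ((powMonoidHom p : ↥(K ⊓ U) →* ↥(K ⊓ U)).ker)
          = (Set.range ι).ncard := h1
        _ < (Set.univ : Set ↥{u : Rˣ | (u : R) - 1 ∈ Ideal.span {(p : R) ^ (n - 1)}}).ncard :=
            Set.ncard_lt_ncard h2 Set.finite_univ
        _ = Nat.card ↥{u : Rˣ | (u : R) - 1 ∈ Ideal.span {(p : R) ^ (n - 1)}} := by
            rw [Set.ncard_univ]
    obtain ⟨S, hStop, hSle⟩ := exists_small_gen hp (n - 1) hexp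
    have hSr : S.card < r := by
      have := lt_of_le_of_lt hSle hcardlt
      exact (Nat.pow_lt_pow_iff_right hp.one_lt).1 this
    exact lt_of_le_of_lt (Nat.sInf_le ⟨S, rfl, hStop⟩) hSr
  · -- rank < r → pure
    intro hlt I hI
    by_contra hne
    have hpn1I : (p : R) ^ (n - 1) ∈ I := minimal_ideal p n hp hrad hne
    have hI0_le : Ideal.span {(p : R) ^ (n - 1)} ≤ I := by
      rw [Ideal.span_le, Set.singleton_subset_iff]; exact hpn1I
    -- every socle element lies in K ⊓ U
    have hsocKU : ∀ u : Rˣ, (u : R) - 1 ∈ Ideal.span {(p : R) ^ (n - 1)} → u ∈ K ⊓ U := by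
      intro u hu
      obtain ⟨u', hu'K, hu'⟩ := hI (((u : R) - 1)) (hI0_le hu)
      have : u' = u := Units.ext (by rw [hu']; ring)
      refine Subgroup.mem_inf.2 ⟨this ▸ hu'K, (hU u).2 (hI0_le_p hu)⟩
    -- injection from socle set into ker
    set ι2 : ↥{u : Rˣ | (u : R) - 1 ∈ Ideal.span {(p : R) ^ (n - 1)}} →
        ((powMonoidHom p : ↥(K ⊓ U) →* ↥(K ⊓ U)).ker) :=
      fun u => ⟨⟨u.1, hsocKU u.1 u.2⟩, by
        have hpow : (u.1 : Rˣ) ^ p = 1 := socle_pow_eq_one p n hp hodd hn2 u.2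
        exact Subtype.ext hpow⟩ with hι2
    have hι2inj : Function.Injective ι2 := by
      rintro a b hab
      simp only [hι2, Subtype.mk.injEq] at hab
      exact Subtype.ext (congrArg (fun x => (x.1.1 : Rˣ)) hab)
    have hge : p ^ r ≤ Nat.card ((powMonoidHom p : ↥(K ⊓ U) →* ↥(K ⊓ U)).ker) := by
      rw [← hcardU0]
      exact Nat.card_le_card_of_injective ι2 hι2inj
    -- the sInf is attained
    letI : Fintype ↥(K ⊓ U) := Fintype.ofFinite _
    have hne' : {m : ℕ | ∃ S : Finset ↥(K ⊓ U),
        S.card = m ∧ Subgroup.closure (S : Set ↥(K ⊓ U)) = ⊤}.Nonempty :=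
      ⟨(Finset.univ : Finset ↥(K ⊓ U)).card, Finset.univ, rfl, by
        rw [Finset.coe_univ, Subgroup.closure_univ]⟩
    obtain ⟨S, hScard, hStop⟩ := Nat.sInf_mem hne'
    have hle : Nat.card ((powMonoidHom p : ↥(K ⊓ U) →* ↥(K ⊓ U)).ker) ≤ p ^ S.card :=
      card_ker_le_of_gen hp S hStop
    have : p ^ r ≤ p ^ S.card := le_trans hge hle
    have : r ≤ S.card := (Nat.pow_le_pow_iff_right hp.one_lt).1 this
    omega
end

section
/- Let R be a finite local commutative ring with residue field F, and let M = {1/(1-t) : t ∈ T, t ≠ 1} where T is the Teichmüller group. If x ∈ I₀ = {x : x·rad(R) = 0} is nonzero, then M·x = R·x, i.e. the set {x/(1-t) : t ∈ T \ {1}} equals the ideal Rx, provided |F| > 2. -/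
/-!
Since `x` annihilates the maximal ideal, `r * x` depends only on the residue of `r`. The
group `T` of order `q - 1` embeds into `Fˣ`: if `t ≡ 1` and `t ^ (q - 1) = 1`, then
`(1 + t + ⋯ + t ^ (q - 2)) (t - 1) = 0` with the first factor `≡ q - 1 = -1` a unit. By counting
`T ≅ Fˣ`, so the residues of `1 / (1 - t)`, `t ∈ T \ {1}`, are exactly `F \ {0, 1}`, and the
generators are the `r * x` with `r̄ ∉ {0, 1}`. As `|F| > 2`, pick `c ∉ {0, 1}`; then
`x = c x + (1 - c) x` is a sum of two generators.
-/

namespace IsLocalRing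

variable {R : Type*} [CommRing R] [IsLocalRing R]

theorem mul_eq_mul_of_residue_eq {x : R} (hx : ∀ y ∈ maximalIdeal R, x * y = 0) {a b : R}
    (hab : residue R a = residue R b) : a * x = b * x := by
  linear_combination hx _ (Ideal.Quotient.eq.1 hab)

theorem eq_one_of_pow_eq_one_of_residue_eq_one {t : R} {n : ℕ} (hn : (n : ResidueField R) ≠ 0)
    (htn : t ^ n = 1) (ht : residue R t = 1) : t = 1 := by
  set s := ∑ i ∈ Finset.range n, t ^ i
  have hs : IsUnit s := (residue_ne_zero_iff_isUnit s).1 (by simpa [s, map_sum, ht] using hn)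
  have : s * (t - 1) = 0 := by rw [geom_sum_mul, htn, sub_self]
  exact sub_eq_zero.1 (hs.mul_right_eq_zero.1 this)

theorem injective_unitsMap_residue_comp_subtype (T : Subgroup Rˣ) [Finite T]
    (hT : (Nat.card T : ResidueField R) ≠ 0) :
    Function.Injective ((Units.map (residue R).toMonoidHom).comp T.subtype) := by
  rw [injective_iff_map_eq_one]
  rintro t ht
  have hpow : ((t : Rˣ) : R) ^ Nat.card T = 1 := by
    rw [← Units.val_pow_eq_pow_val, ← Subgroup.coe_pow, pow_card_eq_one']
    rfl
  exact Subtype.ext <| Units.ext <|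
    eq_one_of_pow_eq_one_of_residue_eq_one hT hpow (congrArg Units.val ht)

theorem exists_mem_residue_eq_of_card_eq [Finite (ResidueField R)] {T : Subgroup Rˣ}
    (hT : Nat.card T = Nat.card (ResidueField R) - 1) {c : ResidueField R} (hc : c ≠ 0) :
    ∃ t ∈ T, residue R t = c := by
  have : Fintype (ResidueField R) := Fintype.ofFinite _
  have hq : 1 < Nat.card (ResidueField R) := Finite.one_lt_card
  have : Finite T := Nat.finite_of_card_ne_zero (by omega)
  have hTF : (Nat.card T : ResidueField R) ≠ 0 := by
    rw [hT, Nat.cast_sub hq.le, Nat.card_eq_fintype_card, FiniteField.cast_card_eq_zero]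
    simp
  have hbij := (Nat.bijective_iff_injective_and_card _).2
    ⟨injective_unitsMap_residue_comp_subtype T hTF, by rw [hT, Nat.card_units]⟩
  obtain ⟨t, ht⟩ := hbij.2 (Units.mk0 c hc)
  exact ⟨t, t.2, congrArg Units.val ht⟩

theorem exists_mul_eq_inverse_one_sub_mul {T : Subgroup Rˣ}
    (hT : ∀ c : ResidueField R, c ≠ 0 → ∃ t ∈ T, residue R t = c)
    {x : R} (hx : ∀ y ∈ maximalIdeal R, x * y = 0) {a : R}
    (ha₀ : residue R a ≠ 0) (ha₁ : residue R a ≠ 1) :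
    ∃ t ∈ T, t ≠ 1 ∧ a * x = Ring.inverse (1 - (t : R)) * x := by
  set c := residue R a
  obtain ⟨t, htT, ht⟩ := hT (1 - c⁻¹) (by rwa [sub_ne_zero, ne_comm, inv_ne_one])
  have hres : residue R (1 - t) = c⁻¹ := by rw [map_sub, map_one, ht, sub_sub_cancel]
  have hunit : IsUnit (1 - (t : R)) := (residue_ne_zero_iff_isUnit _).1 (by simpa [hres])
  refine ⟨t, htT, fun h => ?_, mul_eq_mul_of_residue_eq hx ?_⟩
  · rw [h, Units.val_one, sub_self, map_zero, eq_comm, inv_eq_zero] at hres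
    exact ha₀ hres
  · have := congrArg (residue R) (Ring.inverse_mul_cancel _ hunit)
    rw [map_mul, hres, map_one] at this
    rw [eq_inv_of_mul_eq_one_left this, inv_inv]

theorem mul_mem_of_forall_residue_ne_zero_ne_one (hF : 2 < Nat.card (ResidueField R))
    {x : R} (hx : ∀ y ∈ maximalIdeal R, x * y = 0) {S : AddSubgroup R}
    (hS : ∀ b, residue R b ≠ 0 → residue R b ≠ 1 → b * x ∈ S) (a : R) : a * x ∈ S := by
  by_cases ha₀ : residue R a = 0
  · rw [mul_comm, hx a ((residue_eq_zero_iff a).1 ha₀)]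
    exact S.zero_mem
  by_cases ha₁ : residue R a = 1
  · have : Finite (ResidueField R) := Nat.finite_of_card_ne_zero (by omega)
    obtain ⟨c, hc₀, hc₁⟩ := ENat.exists_ne_ne_of_three_le
      (by rw [ENat.card_eq_coe_natCard]; exact_mod_cast hF) (0 : ResidueField R) 1
    obtain ⟨b, rfl⟩ := residue_surjective c
    have hsplit : a * x = b * x + (1 - b) * x := by
      rw [mul_eq_mul_of_residue_eq hx (b := 1) (by rw [ha₁, map_one])]
      ring
    rw [hsplit]
    refine S.add_mem (hS b hc₀ hc₁) (hS _ ?_ ?_) <;> rw [map_sub, map_one]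
    · exact sub_ne_zero.2 (Ne.symm hc₁)
    · simpa using hc₀
  exact hS a ha₀ ha₁

end IsLocalRing

theorem stmt17_general {R : Type*} [CommRing R] [IsLocalRing R]
    (hF : 2 < Nat.card (IsLocalRing.ResidueField R))
    (T : Subgroup Rˣ)
    (hT : Nat.card ↥T = Nat.card (IsLocalRing.ResidueField R) - 1)
    (x : R)
    (hxI0 : x ∈ IsLocalRing.maximalIdeal R ∧
      ∀ y ∈ IsLocalRing.maximalIdeal R, x * y = 0) :
    AddSubgroup.closure
        {y : R | ∃ t : Rˣ, t ∈ T ∧ t ≠ 1 ∧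
          y = Ring.inverse ((1 : R) - (t : R)) * x} =
      (Ideal.span {x}).toAddSubgroup := by
  have : Finite (IsLocalRing.ResidueField R) := Nat.finite_of_card_ne_zero (by omega)
  have hsurj (c : IsLocalRing.ResidueField R) (hc : c ≠ 0) :=
    IsLocalRing.exists_mem_residue_eq_of_card_eq hT hc
  apply le_antisymm
  · rw [AddSubgroup.closure_le]
    rintro _ ⟨t, -, -, rfl⟩
    exact Ideal.mem_span_singleton'.2 ⟨_, rfl⟩
  · intro y hy
    obtain ⟨a, rfl⟩ := Ideal.mem_span_singleton'.1 hy
    refine IsLocalRing.mul_mem_of_forall_residue_ne_zero_ne_one hF hxI0.2 (fun b hb₀ hb₁ => ?_) a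
    exact AddSubgroup.subset_closure <|
      IsLocalRing.exists_mul_eq_inverse_one_sub_mul hsurj hxI0.2 hb₀ hb₁

/-- let `R` be a finite local commutative ring with residue field `F`,
`|F| > 2`, `T` the Teichmüller group, and `M = {1/(1-t) : t ∈ T, t ≠ 1}`. If
`x ∈ I₀ = {x : x·rad(R) = 0}` is nonzero, then the additive subgroup generated by
`M·x` equals the ideal `Rx`. -/
theorem stmt17 {R : Type*} [CommRing R] [Fintype R] [IsLocalRing R]
    (hF : 2 < Nat.card (IsLocalRing.ResidueField R))
    (T : Subgroup Rˣ)
    (hT : Nat.card ↥T = Nat.card (IsLocalRing.ResidueField R) - 1)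
    (x : R) (hx : x ≠ 0)
    (hxI0 : x ∈ IsLocalRing.maximalIdeal R ∧
      ∀ y ∈ IsLocalRing.maximalIdeal R, x * y = 0) :
    AddSubgroup.closure
        {y : R | ∃ t : Rˣ, t ∈ T ∧ t ≠ 1 ∧
          y = Ring.inverse ((1 : R) - (t : R)) * x} =
      (Ideal.span {x}).toAddSubgroup :=
  stmt17_general hF T hT x hxI0
end
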